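/- Let X and Y be real Banach spaces, A : X → Y a bounded linear operator, and let p and q be norms on Y, each equivalent to the original norm of Y. Let p* and q* denote the corresponding dual norms on Y*, p*(y*) = sup{|y*(y)| : p(y) ≤ 1}. If for every ε > 0 there exists δ > 0 such that whenever y* ∈ Y* with p*(y*) ≤ 1 and S ⊆ {z* : p*(z*) ≤ 1} satisfy y* ∈ w*-closure(S) and ‖A* u* − A* y*‖ ≥ ε for all u* ∈ S, then p*(y*) ≤ 1 − δ; then the same property holds with p* replaced everywhere by the norm p* + q*. (In the paper's terminology: if A* : (Y*, p*) → X* is w*-AUC, then A* : (Y*, p* + q*) → X* is w*-AUC.) -/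

import Mathlib

/-! Fix `g` in the unit ball of `p* + q*` and an `ε`-separated family `S` in that ball with `g`
in its w*-closure. As a supremum of the w*-continuous functions `|· y|`, `q*` is
w*-lower semicontinuous, so after shrinking `S` we may assume `q* u > q* g - δ` on `S`; then `g`
and `S` lie in the `p*`-ball of radius `c = 1 - q* g + δ`. The separation bounds `c` below in
terms of `ε` and `‖A*‖`, and the w*-AUC property of `p*`, applied after rescaling by `c⁻¹`, gives
`p* g ≤ c (1 - δ')`, i.e. `p* g + q* g ≤ 1 - δ` once `δ` is small compared with `δ'`. -/

open Filter Topology Pointwise NormedSpace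

noncomputable section

variable {X Y : Type*} [NormedAddCommGroup X] [NormedSpace ℝ X] [CompleteSpace X]
  [NormedAddCommGroup Y] [NormedSpace ℝ Y] [CompleteSpace Y]

/-- The adjoint `A* : Y* → X*` of a bounded linear operator, `(A* g)(x) = g (A x)`. -/
def opAdjoint (A : X →L[ℝ] Y) : StrongDual ℝ Y →L[ℝ] StrongDual ℝ X :=
  (ContinuousLinearMap.compSL X Y ℝ (RingHom.id ℝ) (RingHom.id ℝ)).flip A

/-- `g` belongs to the weak-star closure of `S` (closure in `σ(E*, E)`). -/
def MemWeakStarClosure {E : Type*} [NormedAddCommGroup E] [NormedSpace ℝ E]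
    (g : StrongDual ℝ E) (S : Set (StrongDual ℝ E)) : Prop :=
  StrongDual.toWeakDual g ∈ closure (StrongDual.toWeakDual '' S)

/-- `r` is a norm on `E` that is `C`-equivalent to the original norm:
`C⁻¹‖u‖ ≤ r u ≤ C‖u‖`. -/
def IsEquivNorm {E : Type*} [NormedAddCommGroup E] [NormedSpace ℝ E]
    (C : ℝ) (r : E → ℝ) : Prop :=
  (∀ u v : E, r (u + v) ≤ r u + r v) ∧ (∀ (a : ℝ) (u : E), r (a • u) = |a| * r u) ∧
    ∀ u : E, C⁻¹ * ‖u‖ ≤ r u ∧ r u ≤ C * ‖u‖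

section

variable {E F : Type*} [NormedAddCommGroup E] [NormedSpace ℝ E]

namespace MemWeakStarClosure

variable {g : StrongDual ℝ E} {S : Set (StrongDual ℝ E)}

theorem nonempty (h : MemWeakStarClosure g S) : S.Nonempty := by
  by_contra hS
  rw [Set.not_nonempty_iff_eq_empty] at hS
  simp [MemWeakStarClosure, hS] at h

theorem smul (h : MemWeakStarClosure g S) (c : ℝ) : MemWeakStarClosure (c • g) (c • S) := by
  rw [MemWeakStarClosure, map_smul, image_smul_set]
  exact smul_closure_subset c _ (Set.smul_mem_smul_set h)

theorem inter_preimage (h : MemWeakStarClosure g S) {V : Set (WeakDual ℝ E)} (hV : IsOpen V)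
    (hgV : StrongDual.toWeakDual g ∈ V) :
    MemWeakStarClosure g (S ∩ StrongDual.toWeakDual ⁻¹' V) := by
  rw [MemWeakStarClosure, Set.image_inter_preimage, Set.inter_comm]
  exact hV.inter_closure ⟨hgV, h⟩

end MemWeakStarClosure

variable {r : E → ℝ} {rd : StrongDual ℝ E → ℝ}

theorem dualNorm_smul_of_nonneg (hrd : ∀ g, IsLUB {a | ∃ y, r y ≤ 1 ∧ a = |g y|} (rd g))
    (c : ℝ) (hc : 0 ≤ c) (g : StrongDual ℝ E) : rd (c • g) = c * rd g := by
  refine (hrd (c • g)).unique ?_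
  convert (hrd g).mul_left hc using 1
  ext a
  simp [abs_mul, abs_of_nonneg hc, eq_comm]

theorem norm_le_mul_dualNorm (hrd : ∀ g, IsLUB {a | ∃ y, r y ≤ 1 ∧ a = |g y|} (rd g))
    {C : ℝ} (hC : 0 < C) (hr_smul : ∀ (a : ℝ) (u : E), r (a • u) = |a| * r u)
    (hr_le : ∀ u, r u ≤ C * ‖u‖) (g : StrongDual ℝ E) : ‖g‖ ≤ C * rd g := by
  have hr0 : r 0 = 0 := by simpa using hr_smul 0 0
  have hrd_nonneg : 0 ≤ rd g := (hrd g).1 ⟨0, hr0.le.trans zero_le_one, by simp⟩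
  refine g.opNorm_le_bound (by positivity) fun y => ?_
  rcases eq_or_ne y 0 with rfl | hy
  · simp
  have ht : 0 < C * ‖y‖ := by positivity
  have hmem : |g ((C * ‖y‖)⁻¹ • y)| ≤ rd g := by
    refine (hrd g).1 ⟨_, ?_, rfl⟩
    rw [hr_smul, abs_of_pos (inv_pos.2 ht), inv_mul_le_iff₀ ht, mul_one]
    exact hr_le y
  rw [map_smul, smul_eq_mul, abs_mul, abs_of_pos (inv_pos.2 ht), inv_mul_le_iff₀ ht] at hmem
  rw [Real.norm_eq_abs]
  linarith

variable [SeminormedAddCommGroup F] [NormedSpace ℝ F]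

theorem norm_map_sub_map_le (T : StrongDual ℝ E →L[ℝ] F) {N : StrongDual ℝ E → ℝ} {C : ℝ}
    (hN : ∀ u, ‖u‖ ≤ C * N u) (u g : StrongDual ℝ E) :
    ‖T u - T g‖ ≤ ‖T‖ * C * (N u + N g) :=
  calc ‖T u - T g‖ = ‖T (u - g)‖ := by rw [map_sub]
    _ ≤ ‖T‖ * ‖u - g‖ := T.le_opNorm _
    _ ≤ ‖T‖ * (C * N u + C * N g) := by
        gcongr; exact (norm_sub_le u g).trans (add_le_add (hN u) (hN g))
    _ = ‖T‖ * C * (N u + N g) := by ring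

/-- The separated-family form, for `ξ = 0`, of `T : (E*, N) → F` being w*-AUC with modulus
`δ` at `ε`. -/
def WeakStarAUCWith (T : StrongDual ℝ E →L[ℝ] F) (N : StrongDual ℝ E → ℝ) (ε δ : ℝ) : Prop :=
  ∀ g : StrongDual ℝ E, N g ≤ 1 → ∀ S : Set (StrongDual ℝ E), (∀ u ∈ S, N u ≤ 1) →
    MemWeakStarClosure g S → (∀ u ∈ S, ε ≤ ‖T u - T g‖) → N g ≤ 1 - δ

def WeakStarAUC (T : StrongDual ℝ E →L[ℝ] F) (N : StrongDual ℝ E → ℝ) : Prop :=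
  ∀ ε : ℝ, 0 < ε → ∃ δ : ℝ, 0 < δ ∧ WeakStarAUCWith T N ε δ

variable {T : StrongDual ℝ E →L[ℝ] F} {N : StrongDual ℝ E → ℝ}

theorem WeakStarAUCWith.le_mul_one_sub {ε δ : ℝ} (hT : WeakStarAUCWith T N ε δ)
    (hN : ∀ c : ℝ, 0 ≤ c → ∀ u, N (c • u) = c * N u) {c : ℝ} (hc : 0 < c)
    {g : StrongDual ℝ E} {S : Set (StrongDual ℝ E)} (hg : N g ≤ c) (hS : ∀ u ∈ S, N u ≤ c)
    (hgS : MemWeakStarClosure g S) (hsep : ∀ u ∈ S, c * ε ≤ ‖T u - T g‖) :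
    N g ≤ c * (1 - δ) := by
  have hc' : 0 ≤ c⁻¹ := inv_nonneg.2 hc.le
  have h := hT (c⁻¹ • g) ?_ (c⁻¹ • S) ?_ (hgS.smul c⁻¹) ?_
  · rwa [hN _ hc', inv_mul_le_iff₀ hc] at h
  · rw [hN _ hc', inv_mul_le_iff₀ hc, mul_one]
    exact hg
  · rintro _ ⟨u, hu, rfl⟩
    rw [hN _ hc', inv_mul_le_iff₀ hc, mul_one]
    exact hS u hu
  · rintro _ ⟨u, hu, rfl⟩
    rw [map_smul, map_smul, ← smul_sub, norm_smul, Real.norm_of_nonneg hc', le_inv_mul_iff₀ hc]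
    exact hsep u hu

theorem WeakStarAUC.add_dualNorm {M : StrongDual ℝ E → ℝ} {q : E → ℝ} {C : ℝ} (hC : 0 < C)
    (hN_smul : ∀ c : ℝ, 0 ≤ c → ∀ u, N (c • u) = c * N u) (hN_norm : ∀ u, ‖u‖ ≤ C * N u)
    (hM : ∀ g, IsLUB {a | ∃ y, q y ≤ 1 ∧ a = |g y|} (M g)) (hT : WeakStarAUC T N) :
    WeakStarAUC T fun u => N u + M u := by
  intro ε hε
  obtain ⟨δ', hδ', hTδ'⟩ := hT (ε / 2) (half_pos hε)
  set m := ε / (2 * (‖T‖ * C + 1))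
  have hm : 0 < m := by positivity
  set δ := min 1 (δ' * m / 2)
  have hδ : 0 < δ := by positivity
  refine ⟨δ, hδ, fun g hg S hS hgS hsep => ?_⟩
  beta_reduce at hg hS
  have hNg : 0 ≤ N g := nonneg_of_mul_nonneg_right ((norm_nonneg g).trans (hN_norm g)) hC
  obtain ⟨_, ⟨y₀, hy₀, rfl⟩, hgy₀, hy₀M⟩ := (hM g).exists_between (sub_lt_self (M g) hδ)
  set S' := S ∩ StrongDual.toWeakDual ⁻¹' {φ | M g - δ < |φ y₀|}
  have hgS' : MemWeakStarClosure g S' :=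
    hgS.inter_preimage (isOpen_lt continuous_const (WeakDual.eval_continuous y₀).abs) hgy₀
  set c := 1 - M g + δ
  have hS'c : ∀ u ∈ S', N u ≤ c := fun u hu => by
    have hMu : |u y₀| ≤ M u := (hM u).1 ⟨y₀, hy₀, rfl⟩
    have hu' : M g - δ < |u y₀| := hu.2
    linarith [hS u hu.1]
  have hgc : N g ≤ c := by linarith
  have hmc : m ≤ c := by
    obtain ⟨u₀, hu₀⟩ := hgS'.nonempty
    have hK : 0 ≤ ‖T‖ * C := by positivity
    rw [div_le_iff₀ (by positivity)]
    calc ε ≤ ‖T‖ * C * (N u₀ + N g) :=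
          (hsep u₀ hu₀.1).trans (norm_map_sub_map_le T hN_norm u₀ g)
      _ ≤ ‖T‖ * C * (2 * c) := by gcongr; linarith [hS'c u₀ hu₀]
      _ ≤ (‖T‖ * C + 1) * (2 * c) := by gcongr <;> linarith
      _ = c * (2 * (‖T‖ * C + 1)) := by ring
  have hc2 : c ≤ 2 := by linarith [abs_nonneg (g y₀), min_le_left 1 (δ' * m / 2)]
  have h := hTδ'.le_mul_one_sub hN_smul (hm.trans_le hmc) hgc hS'c hgS'
    fun u hu => by nlinarith [hsep u hu.1]
  nlinarith [min_le_right 1 (δ' * m / 2)]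

end

theorem statement6_general (A : X →L[ℝ] Y) (p q : Y → ℝ) (Cp : ℝ)
    (hCp : 1 ≤ Cp)
    (hp : IsEquivNorm Cp p)
    (pd qd : StrongDual ℝ Y → ℝ)
    (hpd : ∀ g : StrongDual ℝ Y, IsLUB {a : ℝ | ∃ y : Y, p y ≤ 1 ∧ a = |g y|} (pd g))
    (hqd : ∀ g : StrongDual ℝ Y, IsLUB {a : ℝ | ∃ y : Y, q y ≤ 1 ∧ a = |g y|} (qd g))
    (H : ∀ ε : ℝ, 0 < ε → ∃ δ : ℝ, 0 < δ ∧
      ∀ g : StrongDual ℝ Y, pd g ≤ 1 → ∀ S : Set (StrongDual ℝ Y), (∀ u ∈ S, pd u ≤ 1) →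
        MemWeakStarClosure g S →
        (∀ u ∈ S, ε ≤ ‖opAdjoint A u - opAdjoint A g‖) → pd g ≤ 1 - δ) :
    ∀ ε : ℝ, 0 < ε → ∃ δ : ℝ, 0 < δ ∧
      ∀ g : StrongDual ℝ Y, pd g + qd g ≤ 1 →
        ∀ S : Set (StrongDual ℝ Y), (∀ u ∈ S, pd u + qd u ≤ 1) →
        MemWeakStarClosure g S →
        (∀ u ∈ S, ε ≤ ‖opAdjoint A u - opAdjoint A g‖) → pd g + qd g ≤ 1 - δ :=
  have hCp_pos : 0 < Cp := zero_lt_one.trans_le hCp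
  WeakStarAUC.add_dualNorm hCp_pos (dualNorm_smul_of_nonneg hpd)
    (norm_le_mul_dualNorm hpd hCp_pos hp.2.1 fun u => (hp.2.2 u).2) hqd H

/-- if the adjoint `A* : (Y*, p*) → X*` is w*-AUC (in the separated
family formulation) then so is `A* : (Y*, p* + q*) → X*`, where `p, q` are equivalent
norms on `Y` and `p*, q*` are the corresponding dual norms. -/
theorem statement6 (A : X →L[ℝ] Y) (p q : Y → ℝ) (Cp Cq : ℝ)
    (hCp : 1 ≤ Cp) (hCq : 1 ≤ Cq)
    (hp : IsEquivNorm Cp p) (hq : IsEquivNorm Cq q)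
    (pd qd : StrongDual ℝ Y → ℝ)
    (hpd : ∀ g : StrongDual ℝ Y, IsLUB {a : ℝ | ∃ y : Y, p y ≤ 1 ∧ a = |g y|} (pd g))
    (hqd : ∀ g : StrongDual ℝ Y, IsLUB {a : ℝ | ∃ y : Y, q y ≤ 1 ∧ a = |g y|} (qd g))
    (H : ∀ ε : ℝ, 0 < ε → ∃ δ : ℝ, 0 < δ ∧
      ∀ g : StrongDual ℝ Y, pd g ≤ 1 → ∀ S : Set (StrongDual ℝ Y), (∀ u ∈ S, pd u ≤ 1) →
        MemWeakStarClosure g S →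
        (∀ u ∈ S, ε ≤ ‖opAdjoint A u - opAdjoint A g‖) → pd g ≤ 1 - δ) :
    ∀ ε : ℝ, 0 < ε → ∃ δ : ℝ, 0 < δ ∧
      ∀ g : StrongDual ℝ Y, pd g + qd g ≤ 1 →
        ∀ S : Set (StrongDual ℝ Y), (∀ u ∈ S, pd u + qd u ≤ 1) →
        MemWeakStarClosure g S →
        (∀ u ∈ S, ε ≤ ‖opAdjoint A u - opAdjoint A g‖) → pd g + qd g ≤ 1 - δ :=
  statement6_general A p q Cp hCp hp pd qd hpd hqd H
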